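/- Let F ⊆ P([n]) be union closed with ∅ ∈ F and let T(F) = τ⁻¹({F}) be the fibers of the associated interior operator τ. Then F can be enumerated F = {F₁, ..., F_m} so that (i) |T(F₁)| ≤ |T(F₂)| ≤ ... ≤ |T(F_m)| and (ii) whenever F_i ⊇ F_j we have i ≤ j. -/

import Mathlib

/-!
Larger members of `ℱ` have smaller fibers: if `G ⊆ F` with `G ∈ ℱ`, then `X ↦ X \ (F \ G)`
maps `T(F)` injectively into `T(G)`. Hence sorting `ℱ` by fiber size, breaking ties by a linear
extension of `⊇`, gives the required enumeration.
-/

open Finset Function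

section Enumeration

variable {α : Type*}

theorem Finset.exists_enum_strictMono_comp {β : Type*} [LinearOrder β] {k : α → β}
    (hk : Injective k) (s : Finset α) :
    ∃ e : Fin #s → α,
      (∀ i, e i ∈ s) ∧ (∀ a ∈ s, ∃ i, e i = a) ∧ StrictMono (k ∘ e) := by
  let : LinearOrder α := LinearOrder.lift' k hk
  refine ⟨s.orderEmbOfFin rfl, s.orderEmbOfFin_mem rfl, fun a ha => ?_,
    (s.orderEmbOfFin rfl).strictMono⟩
  rwa [← mem_coe, ← range_orderEmbOfFin s rfl] at ha

theorem Finset.exists_enum_of_antitoneOn [PartialOrder α] {γ : Type*} [LinearOrder γ]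
    {s : Finset α} {f : α → γ} (hf : AntitoneOn f s) :
    ∃ e : Fin #s → α, Injective e ∧ (∀ i, e i ∈ s) ∧ (∀ a ∈ s, ∃ i, e i = a) ∧
      Monotone (f ∘ e) ∧ ∀ i j, e j ≤ e i → i ≤ j := by
  let k : α → γ ×ₗ (LinearExtension α)ᵒᵈ :=
    fun a => toLex (f a, OrderDual.toDual (toLinearExtension a))
  have hk : Injective k := fun _ _ h => (Prod.mk.inj (congrArg ofLex h)).2
  have hk_lt : ∀ a ∈ s, ∀ b ∈ s, a < b → k b < k a := fun a ha b hb hab => by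
    rcases (hf ha hb hab.le).lt_or_eq with h | h
    · exact Prod.Lex.toLex_lt_toLex.2 (.inl h)
    · exact Prod.Lex.toLex_lt_toLex.2
        (.inr ⟨h, (toLinearExtension.monotone hab.le).lt_of_ne hab.ne⟩)
  obtain ⟨e, hmem, hsurj, hmono⟩ := s.exists_enum_strictMono_comp hk
  refine ⟨e, hmono.injective.of_comp, hmem, hsurj,
    fun i j hij => Prod.Lex.monotone_fst _ _ (hmono.monotone hij), fun i j hji => ?_⟩
  by_contra! hij
  rcases hji.eq_or_lt with h | h
  · exact hij.ne (hmono.injective.of_comp h)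
  · exact (hk_lt _ (hmem j) _ (hmem i) h).asymm (hmono hij)

end Enumeration

section Interior

variable {α : Type*} [DecidableEq α] (ℱ : Finset (Finset α))

def familyInterior (X : Finset α) : Finset α :=
  (ℱ.filter (fun G => G ⊆ X)).sup id

theorem familyInterior_subset (X : Finset α) : familyInterior ℱ X ⊆ X :=
  Finset.sup_le fun _ hH => (mem_filter.1 hH).2

theorem subset_familyInterior {G X : Finset α} (hG : G ∈ ℱ) (hGX : G ⊆ X) :
    G ⊆ familyInterior ℱ X :=
  le_sup (f := id) (mem_filter.2 ⟨hG, hGX⟩)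

theorem familyInterior_sdiff_sdiff {F G X : Finset α} (hG : G ∈ ℱ) (hGF : G ⊆ F)
    (hX : familyInterior ℱ X = F) : familyInterior ℱ (X \ (F \ G)) = G := by
  refine subset_antisymm (Finset.sup_le fun H hH => ?_) (subset_familyInterior ℱ hG ?_)
  · obtain ⟨hHℱ, hHX⟩ := mem_filter.1 hH
    have hHF : H ⊆ F := hX ▸ subset_familyInterior ℱ hHℱ (hHX.trans sdiff_subset)
    intro a ha
    by_contra haG
    exact (mem_sdiff.1 (hHX ha)).2 (mem_sdiff.2 ⟨hHF ha, haG⟩)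
  · exact subset_sdiff.2 ⟨hGF.trans (hX ▸ familyInterior_subset ℱ X), disjoint_sdiff⟩

theorem card_fiber_familyInterior_le [Fintype α] {F G : Finset α} (hG : G ∈ ℱ)
    (hGF : G ⊆ F) :
    #{X | familyInterior ℱ X = F} ≤ #{X | familyInterior ℱ X = G} := by
  have hF : ∀ X ∈ ({X | familyInterior ℱ X = F} : Finset _), F \ G ⊆ X := fun X hX =>
    sdiff_subset.trans ((mem_filter.1 hX).2 ▸ familyInterior_subset ℱ X)
  refine card_le_card_of_injOn (· \ (F \ G)) (fun X hX => ?_) (fun X₁ h₁ X₂ h₂ h => ?_)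
  · exact mem_filter.2 ⟨mem_univ _, familyInterior_sdiff_sdiff ℱ hG hGF (mem_filter.1 hX).2⟩
  · rw [← sdiff_union_of_subset (hF X₁ h₁), ← sdiff_union_of_subset (hF X₂ h₂)]
    exact congrArg (· ∪ (F \ G)) h

end Interior

theorem stmt_10_general (n : ℕ) (ℱ : Finset (Finset (Fin n)))
    (τ : Finset (Fin n) → Finset (Fin n))
    (hτ : ∀ X, τ X = (ℱ.filter (fun G => G ⊆ X)).sup id) :
    ∃ e : Fin ℱ.card → Finset (Fin n),
      Function.Injective e ∧ (∀ i, e i ∈ ℱ) ∧ (∀ F ∈ ℱ, ∃ i, e i = F) ∧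
      (∀ i j : Fin ℱ.card, i ≤ j →
        (Finset.univ.filter (fun X : Finset (Fin n) => τ X = e i)).card
          ≤ (Finset.univ.filter (fun X : Finset (Fin n) => τ X = e j)).card) ∧
      (∀ i j : Fin ℱ.card, e j ⊆ e i → i ≤ j) := by
  obtain rfl : τ = familyInterior ℱ := funext hτ
  exact exists_enum_of_antitoneOn fun G hG _ _ hGF => card_fiber_familyInterior_le ℱ hG hGF

theorem stmt_10 (n : ℕ) (ℱ : Finset (Finset (Fin n)))
    (hEmpty : ∅ ∈ ℱ) (hUC : ∀ A ∈ ℱ, ∀ B ∈ ℱ, A ∪ B ∈ ℱ)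
    (τ : Finset (Fin n) → Finset (Fin n))
    (hτ : ∀ X, τ X = (ℱ.filter (fun G => G ⊆ X)).sup id) :
    ∃ e : Fin ℱ.card → Finset (Fin n),
      Function.Injective e ∧ (∀ i, e i ∈ ℱ) ∧ (∀ F ∈ ℱ, ∃ i, e i = F) ∧
      (∀ i j : Fin ℱ.card, i ≤ j →
        (Finset.univ.filter (fun X : Finset (Fin n) => τ X = e i)).card
          ≤ (Finset.univ.filter (fun X : Finset (Fin n) => τ X = e j)).card) ∧
      (∀ i j : Fin ℱ.card, e j ⊆ e i → i ≤ j) :=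
  stmt_10_general n ℱ τ hτ
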